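/- Let A be a commutative ℚ-algebra and x, y ∈ A with x^{⊗m} = 0 in A^{⊗m} and y^{⊗n} = 0 in A^{⊗n} (the m-fold, resp. n-fold, tensor product over ℚ, with x^{⊗m} = x ⊗ ⋯ ⊗ x). Then (x + y)^{⊗(m+n−1)} = 0 in A^{⊗(m+n−1)}. -/
import Mathlib


open scoped TensorProduct

open PiTensorProduct in
lemma tprod_eq_zero_of_subset {A : Type*} [CommRing A] [Algebra ℚ A] {ι : Type*} [Fintype ι]
    [DecidableEq ι] (v : ι → A) (x : A) (S : Finset ι) (hS : ∀ i ∈ S, v i = x)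
    (hx : (tprod ℚ (fun _ : Fin S.card => x) : ⨂[ℚ] _ : Fin S.card, A) = 0) :
    (tprod ℚ v : ⨂[ℚ] _ : ι, A) = 0 := by
  classical
  set s : Set ι := (S : Set ι) with hs
  let e : s ⊕ (sᶜ : Set ι) ≃ ι := Equiv.Set.sumCompl s
  have h1 : (tprod ℚ v : ⨂[ℚ] _ : ι, A)
      = reindex ℚ (fun _ => A) e (tprod ℚ (fun i => v (e i))) := by
    rw [reindex_tprod]
    congr 1
    ext i
    simp
  rw [h1]
  have h2 : (tprod ℚ (fun i : s ⊕ (sᶜ : Set ι) => v (e i)))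
      = tmulEquiv (ι := s) (ι₂ := (sᶜ : Set ι)) ℚ A
        ((tprod ℚ (fun i : s => v (e (Sum.inl i)))) ⊗ₜ[ℚ]
         (tprod ℚ (fun i : (sᶜ : Set ι) => v (e (Sum.inr i))))) := by
    rw [tmulEquiv_apply]
    congr 1
    ext i
    cases i <;> rfl
  rw [h2]
  have h3 : (tprod ℚ (fun i : s => v (e (Sum.inl i))) : ⨂[ℚ] _ : s, A) = 0 := by
    have hconst : (fun i : s => v (e (Sum.inl i))) = fun _ : s => x := by
      ext i
      exact hS i.1 (by exact_mod_cast i.2)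
    rw [hconst]
    let e2 : Fin S.card ≃ s := (Fintype.equivFinOfCardEq (by simp [hs])).symm
    have := congrArg (reindex ℚ (fun _ : Fin S.card => A) e2) hx
    rw [reindex_tprod, map_zero] at this
    exact this
  rw [h3, TensorProduct.zero_tmul, LinearEquiv.map_zero, LinearEquiv.map_zero]

open PiTensorProduct in
lemma tprod_const_eq_zero_mono {A : Type*} [CommRing A] [Algebra ℚ A] (x : A) {m k : ℕ}
    (hmk : m ≤ k)
    (hx : (tprod ℚ (fun _ : Fin m => x) : ⨂[ℚ] _ : Fin m, A) = 0) :
    (tprod ℚ (fun _ : Fin k => x) : ⨂[ℚ] _ : Fin k, A) = 0 := by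
  obtain ⟨S, -, hcard⟩ := Finset.exists_subset_card_eq
    (show m ≤ (Finset.univ : Finset (Fin k)).card by simpa using hmk)
  exact tprod_eq_zero_of_subset _ x S (fun _ _ => rfl) (by rw [hcard]; exact hx)

/-- Smash-nilpotence is stable under sums: if `x^{⊗m} = 0` in `A^{⊗m}` and `y^{⊗n} = 0` in
`A^{⊗n}`, then `(x + y)^{⊗(m+n-1)} = 0` in `A^{⊗(m+n-1)}`. -/
theorem smash_nilpotent_add {A : Type*} [CommRing A] [Algebra ℚ A] (x y : A) (m n : ℕ)
    (hx : (PiTensorProduct.tprod ℚ (fun _ : Fin m => x) : ⨂[ℚ] _ : Fin m, A) = 0)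
    (hy : (PiTensorProduct.tprod ℚ (fun _ : Fin n => y) : ⨂[ℚ] _ : Fin n, A) = 0) :
    (PiTensorProduct.tprod ℚ (fun _ : Fin (m + n - 1) => x + y) :
      ⨂[ℚ] _ : Fin (m + n - 1), A) = 0 := by
  classical
  have hsplit : (fun _ : Fin (m + n - 1) => x + y)
      = (fun _ : Fin (m + n - 1) => x) + (fun _ : Fin (m + n - 1) => y) := rfl
  rw [hsplit, MultilinearMap.map_add_univ]
  apply Finset.sum_eq_zero
  intro S _
  by_cases hc : m ≤ S.card
  · exact tprod_eq_zero_of_subset _ x S (fun i hi => by simp [Finset.piecewise, hi])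
      (tprod_const_eq_zero_mono x hc hx)
  · apply tprod_eq_zero_of_subset _ y Sᶜ (fun i hi => by
      simp [Finset.piecewise, Finset.mem_compl.mp hi])
    apply tprod_const_eq_zero_mono y _ hy
    have h1 : Sᶜ.card = (m + n - 1) - S.card := by
      rw [Finset.card_compl]; simp
    have h2 : S.card ≤ m + n - 1 := by
      simpa using Finset.card_le_card (Finset.subset_univ S)
    omega
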